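/- arXiv:1410.7437 — 3 statements merged into one kernel-verified Lean document; each statement's English description precedes it below -/
import Mathlib

section
/- (Wilson's fundamental construction.) Suppose there exists a group divisible design (X,Π,𝓑) with groups X₁,…,X_u, and let ω : X → ℤ≥0 be a weight function such that for every block B ∈ 𝓑 there exists a GDD of type [ω(x) : x ∈ B] (one group of size ω(x) for each point x of B) with block sizes in K. Then there exists a GDD of type [∑_{x∈X₁} ω(x), …, ∑_{x∈X_u} ω(x)] with block sizes in K. -/
/-- `IsGDD V grp K Blocks` : a group divisible design on point set `V`, where the group of
a point `x` is `grp x`; every block is a subset of `V` with size in `K` meeting each group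
at most once, and every pair of points of `V` from distinct groups lies in exactly one block. -/
def IsGDD {X ι : Type*} (V : Finset X) (grp : X → ι) (K : Set ℕ)
    (Blocks : Finset (Finset X)) : Prop :=
  (∀ B ∈ Blocks, B ⊆ V ∧ B.card ∈ K ∧ ∀ x ∈ B, ∀ y ∈ B, grp x = grp y → x = y) ∧
    ∀ x ∈ V, ∀ y ∈ V, grp x ≠ grp y → ∃! B, B ∈ Blocks ∧ x ∈ B ∧ y ∈ B

/-!
Inflate every point `x` of the master design into `ω x` new points, the pairs `⟨x, k⟩` with
`k : Fin (ω x)`. Relabelled, the ingredient GDD on a master block `B` lives on the new points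
over `B`, its groups being the fibres over the points of `B`. Two new points in different master
groups lie over exactly one master block, and inside its ingredient in exactly one block; so the
union of all ingredient blocks is a GDD whose groups are the new points over the master groups.
-/

open Finset

section

variable {Y Z X ι ι' : Type*} {K : Set ℕ}

theorem isGDD_comp_iff {V : Finset Y} {g : Y → ι} {h : ι → ι'} (hh : Function.Injective h)
    {Blocks : Finset (Finset Y)} : IsGDD V (h ∘ g) K Blocks ↔ IsGDD V g K Blocks := by
  simp only [IsGDD, Function.comp_apply, ne_eq, hh.eq_iff]

theorem IsGDD.map [DecidableEq Z] {V : Finset Y} {g : Z → ι} {Blocks : Finset (Finset Y)}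
    (f : Y ↪ Z) (hGDD : IsGDD V (g ∘ f) K Blocks) :
    IsGDD (V.map f) g K (Blocks.image (·.map f)) := by
  obtain ⟨hblocks, hpairs⟩ := hGDD
  constructor
  · simp only [mem_image, forall_exists_index, and_imp]
    rintro _ C hC rfl
    obtain ⟨hCV, hCK, hCg⟩ := hblocks C hC
    refine ⟨map_subset_map.2 hCV, by rwa [card_map], ?_⟩
    simp only [mem_map, forall_exists_index, and_imp]
    rintro _ y hy rfl _ z hz rfl hyz
    exact congrArg f (hCg y hy z hz hyz)
  · simp only [mem_map, forall_exists_index, and_imp]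
    rintro _ y hy rfl _ z hz rfl hyz
    obtain ⟨C, ⟨hC, hyC, hzC⟩, hCuniq⟩ := hpairs y hy z hz hyz
    refine ⟨C.map f, ⟨mem_image_of_mem _ hC, mem_map_of_mem _ hyC, mem_map_of_mem _ hzC⟩, ?_⟩
    rintro _ ⟨hDimg, hyD, hzD⟩
    obtain ⟨D, hD, rfl⟩ := mem_image.1 hDimg
    rw [mem_map'] at hyD hzD
    rw [hCuniq D ⟨hD, hyD, hzD⟩]

theorem IsGDD.biUnion_of_isGDD_preimage [DecidableEq X] [Fintype Y] [DecidableEq Y]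
    {V : Finset X} {grp : X → ι} {L : Set ℕ} {MBlocks : Finset (Finset X)} (π : Y → X)
    (IBlocks : Finset X → Finset (Finset Y)) (hM : IsGDD V grp L MBlocks)
    (hI : ∀ B ∈ MBlocks, IsGDD (univ.filter fun y => π y ∈ B) π K (IBlocks B)) :
    IsGDD (univ.filter fun y => π y ∈ V) (grp ∘ π) K (MBlocks.biUnion IBlocks) := by
  obtain ⟨hMblocks, hMpairs⟩ := hM
  have lies_over {B} (hB : B ∈ MBlocks) {D} (hD : D ∈ IBlocks B) {y} (hy : y ∈ D) : π y ∈ B :=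
    (mem_filter.1 (((hI B hB).1 D hD).1 hy)).2
  constructor
  · intro D hD
    obtain ⟨B, hB, hD⟩ := mem_biUnion.1 hD
    obtain ⟨hBV, -, hBgrp⟩ := hMblocks B hB
    obtain ⟨-, hDK, hDπ⟩ := (hI B hB).1 D hD
    refine ⟨fun y hy => mem_filter.2 ⟨mem_univ y, hBV (lies_over hB hD hy)⟩, hDK,
      fun y hy z hz hyz => hDπ y hy z hz ?_⟩
    exact hBgrp _ (lies_over hB hD hy) _ (lies_over hB hD hz) hyz
  · intro y hy z hz hyz
    obtain ⟨B, ⟨hB, hyB, hzB⟩, hBuniq⟩ :=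
      hMpairs (π y) (mem_filter.1 hy).2 (π z) (mem_filter.1 hz).2 hyz
    obtain ⟨D, ⟨hD, hyD, hzD⟩, hDuniq⟩ :=
      (hI B hB).2 y (by simpa) z (by simpa) fun h => hyz (congrArg grp h)
    refine ⟨D, ⟨mem_biUnion.2 ⟨B, hB, hD⟩, hyD, hzD⟩, ?_⟩
    rintro D' ⟨hD', hyD', hzD'⟩
    obtain ⟨B', hB', hD'⟩ := mem_biUnion.1 hD'
    obtain rfl : B' = B := hBuniq B' ⟨hB', lies_over hB' hD' hyD', lies_over hB' hD' hzD'⟩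
    exact hDuniq D' ⟨hD', hyD', hzD'⟩

theorem exists_equiv_sigma_fin_of_card_fiber [Fintype Y] [DecidableEq Z] (f : Y → Z)
    (m : Z → ℕ) (hf : ∀ z, (univ.filter fun y => f y = z).card = m z) :
    ∃ E : Y ≃ Σ z, Fin (m z), ∀ y, (E y).1 = f y :=
  ⟨(Equiv.sigmaFiberEquiv f).symm.trans (Equiv.sigmaCongrRight fun z =>
      Fintype.equivFinOfCardEq (by rw [Fintype.card_subtype, hf])),
    fun _ => rfl⟩

theorem IsGDD.exists_sigma_fin_of_card_fiber [Fintype X] [DecidableEq X] [Fintype Y]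
    {ω : X → ℕ} {B : Finset X} {g : Y → B} {Blocks : Finset (Finset Y)}
    (hGDD : IsGDD univ g K Blocks)
    (hcard : ∀ b, (univ.filter fun y => g y = b).card = ω b) :
    ∃ Blocks' : Finset (Finset (Σ x, Fin (ω x))),
      IsGDD (univ.filter fun q => q.1 ∈ B) Sigma.fst K Blocks' := by
  obtain ⟨E, hE⟩ := exists_equiv_sigma_fin_of_card_fiber g (fun b => ω b) hcard
  let E' := E.trans (Equiv.subtypeSigmaEquiv (fun x => Fin (ω x)) (· ∈ B)).symm
  let f := E'.toEmbedding.trans (Function.Embedding.subtype _)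
  have hf : Sigma.fst ∘ f = Subtype.val ∘ g := funext fun y => congrArg Subtype.val (hE y)
  have hmap := IsGDD.map f (by rwa [hf, isGDD_comp_iff Subtype.val_injective])
  rw [← map_map, map_univ_equiv, univ_map_subtype] at hmap
  exact ⟨_, hmap⟩

theorem card_filter_sigma_fst [Fintype X] {ω : X → ℕ} (p : X → Prop) [DecidablePred p] :
    (univ.filter fun q : Σ x, Fin (ω x) => p q.1).card = ∑ x ∈ univ.filter p, ω x := by
  have : (univ.filter fun q : Σ x, Fin (ω x) => p q.1) = (univ.filter p).sigma fun _ => univ := by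
    ext; simp
  simp [this, card_sigma]

end

theorem statement4_general {X ι : Type} [Fintype X] [DecidableEq X] [DecidableEq ι]
    (grp : X → ι) (MBlocks : Finset (Finset X))
    (hM : IsGDD Finset.univ grp (Set.univ : Set ℕ) MBlocks)
    (K : Set ℕ) (ω : X → ℕ)
    (hing : ∀ B ∈ MBlocks, ∃ (n : ℕ) (g' : Fin n → {x // x ∈ B})
        (IBlocks : Finset (Finset (Fin n))),
        IsGDD Finset.univ g' K IBlocks ∧
          ∀ xb : {x // x ∈ B},
            (Finset.univ.filter fun y => g' y = xb).card = ω xb.val) :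
    ∃ (n : ℕ) (g : Fin n → ι) (NBlocks : Finset (Finset (Fin n))),
      IsGDD Finset.univ g K NBlocks ∧
        ∀ i : ι, (Finset.univ.filter fun y => g y = i).card
          = ∑ x ∈ Finset.univ.filter fun x => grp x = i, ω x := by
  have hweighted : ∀ B ∈ MBlocks, ∃ IBlocks : Finset (Finset (Σ x, Fin (ω x))),
      IsGDD (univ.filter fun q => q.1 ∈ B) Sigma.fst K IBlocks := by
    intro B hB
    obtain ⟨n, g', IBlocks, hGDD, hcard⟩ := hing B hB
    exact hGDD.exists_sigma_fin_of_card_fiber hcard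
  choose! IBlocks hIBlocks using hweighted
  have hW := hM.biUnion_of_isGDD_preimage Sigma.fst IBlocks hIBlocks
  rw [filter_true_of_mem fun _ _ => mem_univ _] at hW
  let e := Fintype.equivFin (Σ x, Fin (ω x))
  have he : (grp ∘ Sigma.fst ∘ e.symm) ∘ e = grp ∘ Sigma.fst := funext fun q => by simp
  have hmap := IsGDD.map e.toEmbedding (he ▸ hW)
  rw [map_univ_equiv] at hmap
  refine ⟨_, _, _, hmap, fun i => ?_⟩
  rw [← card_filter_sigma_fst]
  exact card_equiv e.symm (by simp)

/-- Wilson's fundamental construction.  Let `(X, Π, 𝓑)` be a GDD (with unrestricted block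
sizes) with groups the fibres of `grp : X → ι`, and let `ω : X → ℕ` be a weight function
such that for every block `B` there is an ingredient GDD, with block sizes in `K`, having
one group of size `ω x` for each point `x ∈ B`.  Then there is a GDD with block sizes in
`K` having one group of size `∑_{x ∈ Xᵢ} ω x` for each group `Xᵢ` of the master GDD. -/
theorem statement4 {X ι : Type} [Fintype X] [DecidableEq X] [Fintype ι] [DecidableEq ι]
    (grp : X → ι) (MBlocks : Finset (Finset X))
    (hM : IsGDD Finset.univ grp (Set.univ : Set ℕ) MBlocks)
    (K : Set ℕ) (ω : X → ℕ)
    (hing : ∀ B ∈ MBlocks, ∃ (n : ℕ) (g' : Fin n → {x // x ∈ B})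
        (IBlocks : Finset (Finset (Fin n))),
        IsGDD Finset.univ g' K IBlocks ∧
          ∀ xb : {x // x ∈ B},
            (Finset.univ.filter fun y => g' y = xb).card = ω xb.val) :
    ∃ (n : ℕ) (g : Fin n → ι) (NBlocks : Finset (Finset (Fin n))),
      IsGDD Finset.univ g K NBlocks ∧
        ∀ i : ι, (Finset.univ.filter fun y => g y = i).card
          = ∑ x ∈ Finset.univ.filter fun x => grp x = i, ω x :=
  statement4_general grp MBlocks hM K ω hing
end

section
/- For every integer d ≥ 1, PG_d(4) admits a legal truncation removing [d-1]₄ + 1 points such that some hyperplane has precisely one point removed (i.e., [d-1]₄ ∈ S(d,0)). -/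
/-- The field with four elements. -/
abbrev F4 : Type := GaloisField 2 2

/-- The points of the projective space `PG_d(4)` : one-dimensional subspaces of `F4^(d+1)`. -/
abbrev PGPoint (d : ℕ) := Projectivization F4 (Fin (d + 1) → F4)

/-- The set of projective points lying in a given linear subspace `W` of `F4^(d+1)`. -/
def pointsIn {d : ℕ} (W : Submodule F4 (Fin (d + 1) → F4)) : Set (PGPoint d) :=
  {p | p.submodule ≤ W}

/-- A line of `PG_d(4)` : the set of points contained in some 2-dimensional linear subspace. -/
def IsLine {d : ℕ} (L : Set (PGPoint d)) : Prop :=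
  ∃ W : Submodule F4 (Fin (d + 1) → F4), Module.finrank F4 W = 2 ∧ L = pointsIn W

/-- `LegalTrunc D` : removing the point set `D` from `PG_d(4)` is a legal truncation,
i.e. no line has exactly two points outside `D`. -/
def LegalTrunc {d : ℕ} (D : Set (PGPoint d)) : Prop :=
  ∀ L : Set (PGPoint d), IsLine L → (L \ D).ncard ≠ 2

/-- `bracket4 e = [e]₄ = 1 + 4 + 4² + ⋯ + 4^e`. -/
def bracket4 (e : ℕ) : ℕ := ∑ i ∈ Finset.range (e + 1), 4 ^ i

/-- `TT d i` (the set `T(d,i)` of the paper): the set of integers `n` such that `PG_d(4)`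
admits a legal truncation removing `n` points, in which some hyperplane `H` has
removed-point set exactly the point set of a copy of `PG_i(4)` contained in `H`. -/
def TT (d i : ℕ) : Set ℕ :=
  {n | ∃ D : Set (PGPoint d), LegalTrunc D ∧ D.ncard = n ∧
    ∃ H W : Submodule F4 (Fin (d + 1) → F4),
      Module.finrank F4 H = d ∧ Module.finrank F4 W = i + 1 ∧ W ≤ H ∧
        D ∩ pointsIn H = pointsIn W}

/-- `SS d i = S(d,i) = T(d,i) - [i]₄` (every element of `T(d,i)` is at least `[i]₄`). -/
def SS (d i : ℕ) : Set ℕ := {m | m + bracket4 i ∈ TT d i}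

/-!
Call the last nonzero coordinate of a vector its top index. Given linear forms `ℓ k`, remove the
points `[x]` with `ℓ k x = 0`, where `k` is the top index of `x`. This is always a legal
truncation: on a line whose vectors have top index at most `k`, the four points with `x k ≠ 0`
are `[v + t • u]`, `t ∈ F₄`, and `t ↦ ℓ k (v + t • u)` is affine, so it vanishes at none, one or
all four of them; the fifth point shifts the number of surviving points by at most one, so that
number is never `2`.

With `ℓ 0 = 0`, `ℓ 1 = x 0` and `ℓ k = x 1 - x k` for `k ≥ 2`, the removed points of top index
`k` number `1`, `1` and `4 ^ (k - 1)`, which add up to `[d-1]₄ + 1`, and the only removed point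
on the hyperplane `x 1 = 0` is `[e₀]`.
-/

open Projectivization
open scoped LinearAlgebra.Projectivization

lemma card_F4 : Nat.card F4 = 4 := by
  simpa using GaloisField.card 2 2 (by norm_num)

section TopIndex

variable {K ι : Type*} [Field K] [LinearOrder ι]

def IsTopIndex (k : ι) (x : ι → K) : Prop :=
  x k ≠ 0 ∧ ∀ i, k < i → x i = 0

lemma IsTopIndex.unique {k k' : ι} {x : ι → K} (h : IsTopIndex k x) (h' : IsTopIndex k' x) :
    k = k' := by
  by_contra hne
  rcases lt_or_gt_of_ne hne with hlt | hlt
  · exact h'.1 (h.2 k' hlt)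
  · exact h.1 (h'.2 k hlt)

lemma isTopIndex_smul_iff {c : K} (hc : c ≠ 0) {k : ι} {x : ι → K} :
    IsTopIndex k (c • x) ↔ IsTopIndex k x := by
  simp [IsTopIndex, hc]

lemma exists_isTopIndex [Finite ι] {x : ι → K} (hx : x ≠ 0) : ∃ k, IsTopIndex k x := by
  obtain ⟨i, hi⟩ := Function.ne_iff.1 hx
  obtain ⟨k, hk, hmax⟩ := Set.exists_max_image {i | x i ≠ 0} id (Set.toFinite _) ⟨i, hi⟩
  exact ⟨k, hk, fun j hkj => by_contra fun hj => (hmax j hj).not_gt hkj⟩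

def topIndexZeroLocus (ℓ : ι → Module.Dual K (ι → K)) : Set (ℙ K (ι → K)) :=
  {p | ∃ k, IsTopIndex k p.rep ∧ ℓ k p.rep = 0}

lemma mk_mem_topIndexZeroLocus_iff (ℓ : ι → Module.Dual K (ι → K)) {k : ι} {x : ι → K}
    (hx : x ≠ 0) (hk : IsTopIndex k x) : mk K x hx ∈ topIndexZeroLocus ℓ ↔ ℓ k x = 0 := by
  obtain ⟨a, ha⟩ := exists_smul_eq_mk_rep K x hx
  have hrep : IsTopIndex k (mk K x hx).rep := by
    rwa [← ha, Units.smul_def, isTopIndex_smul_iff a.ne_zero]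
  simp only [topIndexZeroLocus, Set.mem_ofPred_eq]
  refine ⟨fun ⟨k', hk', h⟩ => ?_, fun h => ⟨k, hrep, ?_⟩⟩
  · rw [hrep.unique hk', ← ha, Units.smul_def, map_smul, smul_eq_zero] at *
    exact h.resolve_left a.ne_zero
  · rw [← ha, Units.smul_def, map_smul, h, smul_zero]

lemma ncard_topIndexZeroLocus [Fintype ι] [Finite K] (ℓ : ι → Module.Dual K (ι → K)) :
    (topIndexZeroLocus ℓ).ncard =
      ∑ k, {x : ι → K | x k = 1 ∧ (∀ i, k < i → x i = 0) ∧ ℓ k x = 0}.ncard := by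
  set C : ι → Set (ι → K) := fun k => {x | x k = 1 ∧ (∀ i, k < i → x i = 0) ∧ ℓ k x = 0}
  have hC : ∀ {k x}, x ∈ C k → IsTopIndex k x := fun hx => ⟨by simp [hx.1], hx.2.1⟩
  have hC0 : ∀ {k x}, x ∈ C k → x ≠ 0 := fun hx h0 => (hC hx).1 (by simp [h0])
  let F : (Σ k, C k) → ℙ K (ι → K) := fun x => mk K x.2 (hC0 x.2.2)
  have hF : Function.Injective F := by
    rintro ⟨k, x, hx⟩ ⟨k', y, hy⟩ hxy
    obtain ⟨a, rfl⟩ := (mk_eq_mk_iff K _ _ _ _).1 hxy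
    rw [Units.smul_def] at hx
    obtain rfl : k = k' := ((isTopIndex_smul_iff a.ne_zero).1 (hC hx)).unique (hC hy)
    have ha : (a : K) = 1 := by simpa [hy.1] using hx.1
    exact Sigma.subtype_ext rfl (by simp [Units.smul_def, ha])
  have hrange : Set.range F = topIndexZeroLocus ℓ := by
    ext p
    refine ⟨?_, fun ⟨k, hk, hℓ⟩ => ?_⟩
    · rintro ⟨⟨k, x, hx⟩, rfl⟩
      exact (mk_mem_topIndexZeroLocus_iff ℓ _ (hC hx)).2 hx.2.2
    · have hc : (p.rep k)⁻¹ ≠ 0 := inv_ne_zero hk.1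
      refine ⟨⟨k, (p.rep k)⁻¹ • p.rep, ?_, ?_, ?_⟩, ?_⟩
      · simp [hk.1]
      · intro i hi; simp [hk.2 i hi]
      · simp [hℓ]
      · conv_rhs => rw [← mk_rep p]
        exact (mk_eq_mk_iff' K _ _ _ _).2 ⟨_, rfl⟩
  rw [← hrange, Set.ncard_range_of_injective hF, Nat.card_sigma]
  rfl

end TopIndex

section Lines

variable {K ι : Type*} [Field K]

lemma Submodule.exists_topIndex_of_ne_bot [LinearOrder ι] [Finite ι] {W : Submodule K (ι → K)}
    (hW : W ≠ ⊥) : ∃ k, ∃ v ∈ W, v k = 1 ∧ ∀ x ∈ W, ∀ i, k < i → x i = 0 := by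
  set T : Set ι := {i | ∃ x ∈ W, x i ≠ 0}
  have hT : T.Nonempty := by
    obtain ⟨x, hxW, hx0⟩ := W.ne_bot_iff.1 hW
    obtain ⟨i, hi⟩ := Function.ne_iff.1 hx0
    exact ⟨i, x, hxW, hi⟩
  obtain ⟨k, ⟨x, hxW, hxk⟩, hmax⟩ := Set.exists_max_image T id T.toFinite hT
  refine ⟨k, (x k)⁻¹ • x, W.smul_mem _ hxW, by simp [hxk], fun y hyW i hki => ?_⟩
  by_contra hyi
  exact (hmax i ⟨y, hyW, hyi⟩).not_gt hki

lemma exists_eq_smul_add_smul_of_finrank_eq_two {V : Type*} [AddCommGroup V] [Module K V]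
    {W : Submodule K V} (hW : Module.finrank K W = 2) (φ : V →ₗ[K] K) {v : V} (hvW : v ∈ W)
    (hv : φ v = 1) : ∃ u ∈ W, u ≠ 0 ∧ φ u = 0 ∧ ∀ x ∈ W, ∃ c : K, x = φ x • v + c • u := by
  have : FiniteDimensional K W := Module.finite_of_finrank_eq_succ hW
  set ψ := φ ∘ₗ W.subtype
  have hψ : LinearMap.range ψ = ⊤ :=
    LinearMap.range_eq_top.2 fun c => ⟨c • ⟨v, hvW⟩, by simp [ψ, hv]⟩
  have hker : Module.finrank K (LinearMap.ker ψ) = 1 := by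
    have := ψ.finrank_range_add_finrank_ker
    rw [hψ, finrank_top, Module.finrank_self, hW] at this
    omega
  obtain ⟨⟨⟨u, huW⟩, hu⟩, hu0, hspan⟩ := finrank_eq_one_iff'.1 hker
  refine ⟨u, huW, fun h => hu0 (by simp [h]), hu, fun x hxW => ?_⟩
  obtain ⟨c, hc⟩ := hspan ⟨⟨x - φ x • v, W.sub_mem hxW (W.smul_mem _ hvW)⟩, by simp [ψ, hv]⟩
  refine ⟨c, ?_⟩
  have := congrArg (fun y : LinearMap.ker ψ => ((y : W) : V)) hc
  simp only [SetLike.val_smul] at this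
  rw [this]
  abel

lemma setOf_add_mul_ne_zero_eq_empty_or [Finite K] (a b : K) :
    {t : K | a + t * b ≠ 0} = ∅ ∨ Nat.card K - 1 ≤ {t : K | a + t * b ≠ 0}.ncard := by
  by_cases hb : b = 0
  · by_cases ha : a = 0
    · left; simp [ha, hb]
    · right; simp [ha, hb, Set.ncard_univ]
  · right
    have hsub : Set.univ \ {-a / b} ⊆ {t : K | a + t * b ≠ 0} := by
      rintro t ⟨-, ht⟩ h
      exact ht (by rw [Set.mem_singleton_iff]; field_simp; linear_combination h)
    calc Nat.card K - 1 = (Set.univ \ {-a / b}).ncard := by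
          rw [Set.ncard_sdiff_singleton_of_mem (Set.mem_univ _), Set.ncard_univ]
      _ ≤ _ := Set.ncard_le_ncard hsub

end Lines

lemma Set.ncard_univ_pi {ι α : Type*} [Fintype ι] (t : ι → Set α) :
    (Set.univ.pi t).ncard = ∏ i, (t i).ncard := by
  simp only [← Nat.card_coe_set_eq, Nat.card_congr (Equiv.Set.univPi t), Nat.card_pi]

lemma ncard_setOf_forall_notMem_eq {ι α : Type*} [Fintype ι] [DecidableEq ι] (S : Finset ι)
    (g : ι → α) : {x : ι → α | ∀ i ∉ S, x i = g i}.ncard = Nat.card α ^ S.card := by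
  have hpi : {x : ι → α | ∀ i ∉ S, x i = g i} =
      Set.univ.pi fun i => if i ∈ S then Set.univ else {g i} := by
    ext x
    simp only [Set.mem_ofPred_eq, Set.mem_univ_pi]
    refine forall_congr' fun i => ?_
    split_ifs with hi <;> simp [hi]
  rw [hpi, Set.ncard_univ_pi]
  simp only [apply_ite Set.ncard, Set.ncard_univ, Set.ncard_singleton]
  rw [Finset.prod_ite_mem, Finset.univ_inter, Finset.prod_const]

lemma ncard_normalized_of_lt {K : Type*} [Zero K] [One K] {n : ℕ} {j k : Fin n} (hjk : j < k)
    (c : K) :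
    {x : Fin n → K | x k = 1 ∧ (∀ i, k < i → x i = 0) ∧ x j = c}.ncard =
      Nat.card K ^ (k.val - 1) := by
  have hset : {x : Fin n → K | x k = 1 ∧ (∀ i, k < i → x i = 0) ∧ x j = c} =
      {x | ∀ i ∉ (Finset.Iio k).erase j, x i = if i = k then 1 else if i = j then c else 0} := by
    ext x
    simp only [Set.mem_ofPred_eq, Finset.mem_erase, Finset.mem_Iio, not_and_or, not_not, not_lt]
    constructor
    · rintro ⟨hk, htop, hj⟩ i (rfl | hki)
      · simp [hjk.ne, hj]
      · rcases hki.eq_or_lt with rfl | hki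
        · simp [hk]
        · simp [hki.ne', (hjk.trans hki).ne', htop i hki]
    · intro h
      refine ⟨by simpa using h k (Or.inr le_rfl), fun i hi => ?_,
        by simpa [hjk.ne] using h j (Or.inl rfl)⟩
      simpa [hi.ne', (hjk.trans hi).ne'] using h i (Or.inr hi.le)
  rw [hset, ncard_setOf_forall_notMem_eq, Finset.card_erase_of_mem (Finset.mem_Iio.2 hjk),
    Fin.card_Iio]

lemma ncard_ne_two_of_image_subset_of_subset_insert {α β : Type*} [Finite β] {f : α → β}
    (hf : f.Injective) {S : Set α} (hS : S = ∅ ∨ 3 ≤ S.ncard) {A : Set β} {b : β}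
    (hSA : f '' S ⊆ A) (hAS : A ⊆ insert b (f '' S)) : A.ncard ≠ 2 := by
  rcases hS with rfl | hS
  · have := Set.ncard_le_ncard hAS
    rw [Set.image_empty, insert_empty_eq, Set.ncard_singleton] at this
    omega
  · have := Set.ncard_le_ncard hSA
    rw [Set.ncard_image_of_injective _ hf] at this
    omega

section Legal

variable {d : ℕ}

lemma mk_mem_pointsIn_iff {W : Submodule F4 (Fin (d + 1) → F4)} {x : Fin (d + 1) → F4}
    (hx : x ≠ 0) : mk F4 x hx ∈ pointsIn W ↔ x ∈ W := by
  rw [pointsIn, Set.mem_ofPred_eq, submodule_mk, Submodule.span_singleton_le_iff_mem]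

lemma pointsIn_eq_insert_range {W : Submodule F4 (Fin (d + 1) → F4)} {v u : Fin (d + 1) → F4}
    (hvW : v ∈ W) (huW : u ∈ W) (hu : u ≠ 0) (hvu : ∀ t : F4, v + t • u ≠ 0)
    (hW : ∀ x ∈ W, ∃ a c : F4, x = a • v + c • u) :
    pointsIn W = insert (mk F4 u hu) (Set.range fun t => mk F4 (v + t • u) (hvu t)) := by
  ext p
  induction p using ind with | h x hx =>
  rw [Set.mem_insert_iff, Set.mem_range, mk_mem_pointsIn_iff]
  refine ⟨fun hxW => ?_, ?_⟩
  · obtain ⟨a, c, rfl⟩ := hW x hxW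
    by_cases ha : a = 0
    · exact Or.inl ((mk_eq_mk_iff' F4 _ _ _ _).2 ⟨c, by simp [ha]⟩)
    · refine Or.inr ⟨a⁻¹ * c, (mk_eq_mk_iff' F4 _ _ _ _).2 ⟨a⁻¹, ?_⟩⟩
      rw [smul_add, smul_smul, smul_smul, inv_mul_cancel₀ ha, one_smul]
  · rintro (h | ⟨t, h⟩)
    · rw [← mk_mem_pointsIn_iff hx, h, mk_mem_pointsIn_iff]
      exact huW
    · rw [← mk_mem_pointsIn_iff hx, ← h, mk_mem_pointsIn_iff]
      exact W.add_mem hvW (W.smul_mem _ huW)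

theorem legalTrunc_topIndexZeroLocus (ℓ : Fin (d + 1) → Module.Dual F4 (Fin (d + 1) → F4)) :
    LegalTrunc (topIndexZeroLocus ℓ) := by
  rintro L ⟨W, hW, rfl⟩
  obtain ⟨k, v, hvW, hvk, htop⟩ := W.exists_topIndex_of_ne_bot (by rintro rfl; simp at hW)
  obtain ⟨u, huW, hu0, huk, hW'⟩ :=
    exists_eq_smul_add_smul_of_finrank_eq_two hW (LinearMap.proj k) hvW hvk
  simp only [LinearMap.proj_apply] at huk hW'
  have hqk : ∀ t : F4, (v + t • u) k = 1 := by simp [hvk, huk]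
  have hq0 : ∀ t : F4, v + t • u ≠ 0 :=
    fun t h => one_ne_zero (by rw [← hqk t, h, Pi.zero_apply])
  set q : F4 → PGPoint d := fun t => mk F4 (v + t • u) (hq0 t)
  have hq_inj : q.Injective := by
    intro s t hst
    obtain ⟨a, ha⟩ := (mk_eq_mk_iff' F4 _ _ _ _).1 hst
    have ha1 : a = 1 := by simpa [hqk] using congrFun ha k
    rw [ha1, one_smul, add_right_inj] at ha
    exact smul_left_injective F4 hu0 ha.symm
  have hq_mem : ∀ t, q t ∈ topIndexZeroLocus ℓ ↔ ℓ k v + t * ℓ k u = 0 := by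
    intro t
    have hk : IsTopIndex k (v + t • u) :=
      ⟨by simp [hqk], htop _ (W.add_mem hvW (W.smul_mem _ huW))⟩
    rw [mk_mem_topIndexZeroLocus_iff ℓ _ hk, map_add, map_smul, smul_eq_mul]
  have hline := pointsIn_eq_insert_range hvW huW hu0 hq0 fun x hx => ⟨_, hW' x hx⟩
  set S := {t : F4 | ℓ k v + t * ℓ k u ≠ 0}
  have h_lower : q '' S ⊆ pointsIn W \ topIndexZeroLocus ℓ := by
    rintro _ ⟨t, ht, rfl⟩
    exact ⟨hline ▸ Set.mem_insert_of_mem _ ⟨t, rfl⟩, fun h => ht ((hq_mem t).1 h)⟩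
  have h_upper : pointsIn W \ topIndexZeroLocus ℓ ⊆ insert (mk F4 u hu0) (q '' S) := by
    rintro p ⟨hpW, hpD⟩
    rw [hline] at hpW
    rcases hpW with rfl | ⟨t, rfl⟩
    · exact Set.mem_insert _ _
    · exact Set.mem_insert_of_mem _ ⟨t, fun h => hpD ((hq_mem t).2 h), rfl⟩
  refine ncard_ne_two_of_image_subset_of_subset_insert hq_inj ?_ h_lower h_upper
  simpa [card_F4] using setOf_add_mul_ne_zero_eq_empty_or (ℓ k v) (ℓ k u)

end Legal

section Construction

variable {d : ℕ}

noncomputable def removalForm (d : ℕ) (k : Fin (d + 1)) : Module.Dual F4 (Fin (d + 1) → F4) :=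
  if k.val = 0 then 0
  else if k.val = 1 then LinearMap.proj (R := F4) (φ := fun _ => F4) 0
  else LinearMap.proj (R := F4) (φ := fun _ => F4) 1 - LinearMap.proj k

lemma Fin.val_one_of_one_le (hd : 1 ≤ d) : ((1 : Fin (d + 1)) : ℕ) = 1 := by
  rw [Fin.val_one', Nat.mod_eq_of_lt (by omega)]

lemma single_zero_mem_ker_proj_one (hd : 1 ≤ d) :
    (Pi.single 0 1 : Fin (d + 1) → F4) ∈ LinearMap.ker (LinearMap.proj (R := F4) 1) :=
  Pi.single_eq_of_ne (fun h => by simpa [h] using Fin.val_one_of_one_le hd) 1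

lemma ncard_removalForm_slice (k : Fin (d + 1)) :
    {x | x k = 1 ∧ (∀ i, k < i → x i = 0) ∧ removalForm d k x = 0}.ncard = 4 ^ (k.val - 1) := by
  rcases Nat.lt_or_ge k.val 2 with hk | hk
  · interval_cases hk' : k.val
    · obtain rfl : k = 0 := Fin.ext hk'
      refine Set.ncard_eq_one.2 ⟨Pi.single 0 1, Set.ext fun x => ?_⟩
      simp only [removalForm, hk', if_true, LinearMap.zero_apply, and_true, Set.mem_ofPred_eq,
        Set.mem_singleton_iff, funext_iff]
      refine ⟨fun ⟨h0, h⟩ i => ?_,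
        fun h => ⟨by simpa using h 0, fun i hi => by simpa [hi.ne'] using h i⟩⟩
      rcases (Fin.zero_le i).eq_or_lt with rfl | hi
      · simp [h0]
      · simp [hi.ne', h i hi]
    · have h0 : (0 : Fin (d + 1)) < k := by rw [Fin.lt_def]; simp [hk']
      simp only [removalForm, hk', one_ne_zero, if_false, if_true, LinearMap.proj_apply]
      rw [ncard_normalized_of_lt h0, card_F4, hk']
  · have h1 : (1 : Fin (d + 1)) < k := by
      rw [Fin.lt_def, Fin.val_one_of_one_le (by omega)]
      omega
    have hset : {x | x k = 1 ∧ (∀ i, k < i → x i = 0) ∧ removalForm d k x = 0} =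
        {x | x k = 1 ∧ (∀ i, k < i → x i = 0) ∧ x 1 = 1} := by
      ext x
      simp only [removalForm, show k.val ≠ 0 by omega, show k.val ≠ 1 by omega, if_false,
        LinearMap.sub_apply, LinearMap.proj_apply, sub_eq_zero, Set.mem_ofPred_eq]
      exact and_congr_right fun hxk => by rw [hxk]
    rw [hset, ncard_normalized_of_lt h1, card_F4]

lemma ncard_topIndexZeroLocus_removalForm (hd : 1 ≤ d) :
    (topIndexZeroLocus (removalForm d)).ncard = bracket4 (d - 1) + 1 := by
  rw [ncard_topIndexZeroLocus]
  simp only [ncard_removalForm_slice]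
  rw [Fin.sum_univ_succ, bracket4, Nat.sub_add_cancel hd, ← Fin.sum_univ_eq_sum_range (4 ^ ·)]
  simp [add_comm]

lemma topIndexZeroLocus_removalForm_inter_pointsIn_ker (hd : 1 ≤ d) :
    topIndexZeroLocus (removalForm d) ∩ pointsIn (LinearMap.ker (LinearMap.proj 1)) =
      pointsIn (F4 ∙ Pi.single 0 1) := by
  ext p
  induction p using ind with | h x hx =>
  obtain ⟨k, hk⟩ := exists_isTopIndex hx
  rw [Set.mem_inter_iff, mk_mem_topIndexZeroLocus_iff _ hx hk, mk_mem_pointsIn_iff,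
    mk_mem_pointsIn_iff, LinearMap.mem_ker, LinearMap.proj_apply, Submodule.mem_span_singleton]
  constructor
  · rintro ⟨hℓ, hx1⟩
    obtain rfl : k = 0 := by
      by_contra hk0
      have hkv : k.val ≠ 0 := fun h => hk0 (Fin.ext h)
      by_cases hk1 : k.val = 1
      · exact hk.1 (by rwa [show k = 1 from Fin.ext (by rw [hk1, Fin.val_one_of_one_le hd])])
      · simp [removalForm, hkv, hk1, hx1] at hℓ
        exact hk.1 hℓ
    refine ⟨x 0, funext fun i => ?_⟩
    rcases (Fin.zero_le i).eq_or_lt with rfl | hi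
    · simp
    · simp [hi.ne', hk.2 i hi]
  · rintro ⟨a, rfl⟩
    have ha : a ≠ 0 := by rintro rfl; simp at hx
    obtain rfl : k = 0 := hk.unique ⟨by simp [ha], fun i hi => by simp [hi.ne']⟩
    exact ⟨by simp [removalForm], by
      rw [Pi.smul_apply, show (Pi.single 0 1 : Fin (d + 1) → F4) 1 = 0 from
        single_zero_mem_ker_proj_one hd, smul_zero]⟩

end Construction

/-- For every `d ≥ 1` we have `[d-1]₄ ∈ S(d,0)`; i.e. `PG_d(4)` admits a legal truncation
removing `[d-1]₄ + 1` points in which some hyperplane has precisely one point removed. -/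
theorem statement12 (d : ℕ) (hd : 1 ≤ d) : bracket4 (d - 1) ∈ SS d 0 := by
  have hproj : LinearMap.proj (R := F4) (φ := fun _ : Fin (d + 1) => F4) 1 ≠ 0 :=
    fun h => by simpa using LinearMap.congr_fun h (Pi.single 1 1)
  have hsingle : (Pi.single 0 1 : Fin (d + 1) → F4) ≠ 0 := by simp
  refine ⟨topIndexZeroLocus (removalForm d), legalTrunc_topIndexZeroLocus _,
    by simp [ncard_topIndexZeroLocus_removalForm hd, bracket4],
    LinearMap.ker (LinearMap.proj 1), F4 ∙ Pi.single 0 1, ?_, finrank_span_singleton hsingle, ?_,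
    topIndexZeroLocus_removalForm_inter_pointsIn_ker hd⟩
  · have := Module.Dual.finrank_ker_add_one_of_ne_zero hproj
    rw [Module.finrank_fin_fun] at this
    omega
  · exact (Submodule.span_singleton_le_iff_mem _ _).2 (single_zero_mem_ker_proj_one hd)
end

section
/- Let (X,𝓑) be a pairwise balanced design on X = {1,...,n} with all block sizes at least 3, and for each block B let L^B be an idempotent latin square on the symbol set B. Define the n×n array L by L_{ii} = i and, for i ≠ j, L_{ij} = L^B_{ij} where B is the unique block containing {i,j}. Then L is an idempotent latin square of order n; moreover, every flat Y of (X,𝓑) yields a subsquare of L with row set Y, column set Y, and symbol set Y. -/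
/-! Within a block `B` the row `i` of `L` agrees with that of the idempotent latin square `L^B`,
so `L i j` is a point of `B` other than `i` whenever `j ≠ i`. Hence if `L i j = L i k = s ≠ i`,
both `j` and `k` lie in the unique block through `i` and `s`, where the row of `L^B` is injective.
Columns follow by transposing, finiteness turns injectivity into bijectivity, and a flat is closed
under `L` because it contains the block of each of its pairs. -/

/-- `IsPBD V K Blocks` : the blocks form a pairwise balanced design on point set `V`
with block sizes in `K`: every block is a subset of `V` of size in `K`, and every
pair of distinct points of `V` lies in exactly one block. -/
def IsPBD {X : Type*} (V : Finset X) (K : Set ℕ) (Blocks : Finset (Finset X)) : Prop :=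
  (∀ B ∈ Blocks, B ⊆ V ∧ B.card ∈ K) ∧
    ∀ x ∈ V, ∀ y ∈ V, x ≠ y → ∃! B, B ∈ Blocks ∧ x ∈ B ∧ y ∈ B

/-- `IsFlat V Blocks Y` : `Y` is a flat of the design `(V, Blocks)`: `Y ⊆ V` and every
pair of distinct points of `Y` lies in a block entirely contained in `Y`. -/
def IsFlat {X : Type*} (V : Finset X) (Blocks : Finset (Finset X)) (Y : Finset X) : Prop :=
  Y ⊆ V ∧ ∀ x ∈ Y, ∀ y ∈ Y, x ≠ y → ∃ B ∈ Blocks, x ∈ B ∧ y ∈ B ∧ B ⊆ Y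

/-- `IsLatinOn B f` : `f` restricts to a latin square with rows, columns and symbols
indexed by the finite set `B`. -/
def IsLatinOn {X : Type*} (B : Finset X) (f : X → X → X) : Prop :=
  (∀ i ∈ B, Set.BijOn (f i) ↑B ↑B) ∧ ∀ j ∈ B, Set.BijOn (fun i => f i j) ↑B ↑B

/-- `IsSubsquare L R C S` : the rows `R`, columns `C` and symbols `S` form a latin
subsquare of the array `L` : the three sets have equal size, and each row of `R`,
restricted to the columns `C`, hits each symbol of `S` exactly once. -/
def IsSubsquare {X : Type*} (L : X → X → X) (R C S : Finset X) : Prop :=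
  R.card = C.card ∧ C.card = S.card ∧ ∀ i ∈ R, Set.BijOn (L i) ↑C ↑S

variable {X : Type*}

theorem IsLatinOn.transpose {B : Finset X} {f : X → X → X} (h : IsLatinOn B f) :
    IsLatinOn B fun i j => f j i :=
  ⟨h.2, h.1⟩

structure IsBlockGluing (Blocks : Finset (Finset X)) (Lsq : Finset X → X → X → X)
    (L : X → X → X) : Prop where
  existsUnique_block : ∀ x y : X, x ≠ y → ∃! B, B ∈ Blocks ∧ x ∈ B ∧ y ∈ B
  latinOn : ∀ B ∈ Blocks, IsLatinOn B (Lsq B)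
  idem : ∀ B ∈ Blocks, ∀ i ∈ B, Lsq B i i = i
  diag : ∀ i, L i i = i
  apply_of_mem : ∀ i j, i ≠ j → ∀ B ∈ Blocks, i ∈ B → j ∈ B → L i j = Lsq B i j

namespace IsBlockGluing

variable {Blocks : Finset (Finset X)} {Lsq : Finset X → X → X → X} {L : X → X → X}

theorem transpose (hG : IsBlockGluing Blocks Lsq L) :
    IsBlockGluing Blocks (fun B i j => Lsq B j i) (fun i j => L j i) where
  existsUnique_block := hG.existsUnique_block
  latinOn B hB := (hG.latinOn B hB).transpose
  idem := hG.idem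
  diag := hG.diag
  apply_of_mem i j hij B hB hi hj := hG.apply_of_mem j i hij.symm B hB hj hi

theorem apply_mem (hG : IsBlockGluing Blocks Lsq L) {B : Finset X} (hB : B ∈ Blocks)
    {i j : X} (hi : i ∈ B) (hj : j ∈ B) : L i j ∈ B := by
  rcases eq_or_ne i j with rfl | hij
  · rwa [hG.diag]
  · rw [hG.apply_of_mem i j hij B hB hi hj]
    exact ((hG.latinOn B hB).1 i hi).mapsTo hj

theorem apply_eq_self_iff (hG : IsBlockGluing Blocks Lsq L) {i j : X} : L i j = i ↔ j = i := by
  refine ⟨fun h => ?_, fun h => h ▸ hG.diag i⟩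
  by_contra hji
  obtain ⟨B, ⟨hB, hi, hj⟩, -⟩ := hG.existsUnique_block i j (Ne.symm hji)
  have hrow : Lsq B i j = Lsq B i i := by
    rw [← hG.apply_of_mem i j (Ne.symm hji) B hB hi hj, h, hG.idem B hB i hi]
  exact hji (((hG.latinOn B hB).1 i hi).injOn hj hi hrow)

theorem injective_row (hG : IsBlockGluing Blocks Lsq L) (i : X) : Function.Injective (L i) := by
  intro j k hjk
  by_cases hj : j = i
  · subst hj
    exact (hG.apply_eq_self_iff.mp (hjk.symm.trans (hG.diag j))).symm
  by_cases hk : k = i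
  · subst hk
    exact hG.apply_eq_self_iff.mp (hjk.trans (hG.diag k))
  obtain ⟨B, ⟨hB, hiB, hjB⟩, -⟩ := hG.existsUnique_block i j (Ne.symm hj)
  obtain ⟨B', ⟨hB', hiB', hkB'⟩, -⟩ := hG.existsUnique_block i k (Ne.symm hk)
  have hsi : L i j ≠ i := fun h => hj (hG.apply_eq_self_iff.mp h)
  have hBB' : B = B' := by
    obtain ⟨C, -, hC⟩ := hG.existsUnique_block i (L i j) (Ne.symm hsi)
    exact (hC B ⟨hB, hiB, hG.apply_mem hB hiB hjB⟩).trans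
      (hC B' ⟨hB', hiB', hjk ▸ hG.apply_mem hB' hiB' hkB'⟩).symm
  subst hBB'
  refine ((hG.latinOn B hB).1 i hiB).injOn hjB hkB' ?_
  rw [← hG.apply_of_mem i j (Ne.symm hj) B hB hiB hjB,
    ← hG.apply_of_mem i k (Ne.symm hk) B hB hiB hkB', hjk]

theorem injective_col (hG : IsBlockGluing Blocks Lsq L) (j : X) :
    Function.Injective fun i => L i j :=
  hG.transpose.injective_row j

theorem mapsTo_of_isFlat (hG : IsBlockGluing Blocks Lsq L) {V Y : Finset X}
    (hY : IsFlat V Blocks Y) {i : X} (hi : i ∈ Y) : Set.MapsTo (L i) Y Y := by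
  intro j hj
  rcases eq_or_ne i j with rfl | hij
  · rwa [hG.diag]
  · obtain ⟨B, hB, hiB, hjB, hBY⟩ := hY.2 i hi j hj hij
    exact hBY (hG.apply_mem hB hiB hjB)

theorem isSubsquare_of_isFlat (hG : IsBlockGluing Blocks Lsq L) {V Y : Finset X}
    (hY : IsFlat V Blocks Y) : IsSubsquare L Y Y Y :=
  ⟨rfl, rfl, fun _ hi => (Y.finite_toSet.injOn_iff_bijOn_of_mapsTo
    (hG.mapsTo_of_isFlat hY hi)).mp (hG.injective_row _).injOn⟩

end IsBlockGluing

/-- Gluing idempotent latin squares along the blocks of a pairwise balanced design with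
all block sizes at least `3` yields an idempotent latin square of order `n`; moreover,
every flat `Y` of the design yields a latin subsquare with rows, columns and symbols `Y`. -/
theorem statement17 (n : ℕ) (Blocks : Finset (Finset (Fin n)))
    (hPBD : IsPBD Finset.univ {m : ℕ | 3 ≤ m} Blocks)
    (Lsq : Finset (Fin n) → Fin n → Fin n → Fin n)
    (hLsq : ∀ B ∈ Blocks, IsLatinOn B (Lsq B) ∧ ∀ i ∈ B, Lsq B i i = i)
    (L : Fin n → Fin n → Fin n)
    (hdiag : ∀ i : Fin n, L i i = i)
    (hoff : ∀ i j : Fin n, i ≠ j → ∀ B ∈ Blocks, i ∈ B → j ∈ B → L i j = Lsq B i j) :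
    ((∀ i : Fin n, Function.Bijective (L i)) ∧
      (∀ j : Fin n, Function.Bijective fun i => L i j) ∧
      ∀ i : Fin n, L i i = i) ∧
    ∀ Y : Finset (Fin n), IsFlat Finset.univ Blocks Y → IsSubsquare L Y Y Y := by
  have hG : IsBlockGluing Blocks Lsq L :=
    { existsUnique_block := fun x y hxy => hPBD.2 x (Finset.mem_univ x) y (Finset.mem_univ y) hxy
      latinOn := fun B hB => (hLsq B hB).1
      idem := fun B hB => (hLsq B hB).2
      diag := hdiag
      apply_of_mem := hoff }
  exact ⟨⟨fun i => Finite.injective_iff_bijective.mp (hG.injective_row i),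
      fun j => Finite.injective_iff_bijective.mp (hG.injective_col j), hdiag⟩,
    fun _ hY => hG.isSubsquare_of_isFlat hY⟩
end
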